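/- For all natural numbers x and y, if c x y holds then eqe (S x) y or eqo (S x) y holds. (This is an intermediate claim established along the cycles of the paper's cyclic proof for the mutually inductive predicates a, b, c.) -/
import Mathlib


mutual
  inductive A : ℕ → ℕ → Prop
    | zero : A 0 0
    | of_b : ∀ x y, B x y → A x (y + 1)
    | of_c : ∀ x y, C x y → A (x + 1) y
  inductive B : ℕ → ℕ → Prop
    | of_a : ∀ x y, A x y → B (x + 1) y
    | of_c : ∀ x y, C x y → B (x + 1 + 1) y
  inductive C : ℕ → ℕ → Prop
    | of_a : ∀ x y, A x y → C x (y + 1)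
    | of_b : ∀ x y, B x y → C x (y + 1 + 1)
end

mutual
  inductive Eqe : ℕ → ℕ → Prop
    | zero : Eqe 0 0
    | succ : ∀ x y, Eqo x y → Eqe (x + 1) (y + 1)
  inductive Eqo : ℕ → ℕ → Prop
    | one : Eqo 1 1
    | succ : ∀ x y, Eqe x y → Eqo (x + 1) (y + 1)
end


lemma aux_c (x y : ℕ) (h : C x y) : Eqe (x + 1) y ∨ Eqo (x + 1) y := by
  refine C.rec (motive_1 := fun x y _ => Eqe x y ∨ Eqo x y)
    (motive_2 := fun x y _ => Eqe x (y + 1) ∨ Eqo x (y + 1))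
    (motive_3 := fun x y _ => Eqe (x + 1) y ∨ Eqo (x + 1) y)
    ?_ ?_ ?_ ?_ ?_ ?_ ?_ h
  · exact Or.inl Eqe.zero
  · exact fun x y _ ih => ih
  · exact fun x y _ ih => ih
  · exact fun x y _ ih => ih.elim (fun h => Or.inr (Eqo.succ _ _ h)) (fun h => Or.inl (Eqe.succ _ _ h))
  · exact fun x y _ ih => ih.elim (fun h => Or.inr (Eqo.succ _ _ h)) (fun h => Or.inl (Eqe.succ _ _ h))
  · exact fun x y _ ih => ih.elim (fun h => Or.inr (Eqo.succ _ _ h)) (fun h => Or.inl (Eqe.succ _ _ h))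
  · exact fun x y _ ih => ih.elim (fun h => Or.inr (Eqo.succ _ _ h)) (fun h => Or.inl (Eqe.succ _ _ h))

theorem c_eqe_or_eqo (x y : ℕ) (h : C x y) : Eqe (x + 1) y ∨ Eqo (x + 1) y := aux_c x y h
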